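/- arXiv:1608.00342 — 5 statements merged into one kernel-verified Lean document; each statement's English description precedes it below -/
import Mathlib

section
/- The polynomials H_k for k ∈ ℤ generate Λ_m^± = ℤ[x_1^{±1},...,x_m^{±1}]^{S_m} as a ring. -/
open Finset

noncomputable section

variable {F : Type*} [Field F]

/-- Vandermonde product ∏_{i<j} (x i - x j). -/
def Vand {m : ℕ} (x : Fin m → F) : F :=
  ∏ p ∈ Finset.univ.filter fun p : Fin m × Fin m => p.1 < p.2, (x p.1 - x p.2)

/-- Alternation over S_m of the Laurent monomial with exponents `a`. -/
def altSum {m : ℕ} (x : Fin m → F) (a : Fin m → ℤ) : F :=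
  ∑ σ : Equiv.Perm (Fin m), ((Equiv.Perm.sign σ : ℤ) : F) * ∏ i, x (σ i) ^ a i

/-- The Euler character E_λ, defined by E_λ · Δ = {∏ x_i^{λ_i+m-i}}. -/
def Eul {m : ℕ} (x : Fin m → F) (l : Fin m → ℤ) : F :=
  altSum x (fun i => l i + ((m : ℤ) - 1 - (i : ℤ))) / Vand x

/-- H_k = E_{(k,0,…,0)}. -/
def Hch {m : ℕ} (x : Fin m → F) (k : ℤ) : F :=
  Eul x fun i => if (i : ℕ) = 0 then k else 0

/-- The field of rational functions in m variables over ℚ. -/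
abbrev KK (m : ℕ) := FractionRing (MvPolynomial (Fin m) ℚ)

/-- The canonical variables x_1, …, x_m inside the fraction field. -/
def Xv (m : ℕ) (i : Fin m) : KK m :=
  algebraMap (MvPolynomial (Fin m) ℚ) (KK m) (MvPolynomial.X i)

/-- The field automorphism of the rational function field induced by permuting the variables. -/
def permMap (m : ℕ) (σ : Equiv.Perm (Fin m)) : KK m ≃+* KK m :=
  IsFractionRing.ringEquivOfRingEquiv (MvPolynomial.renameEquiv ℚ σ).toRingEquiv

/-- The ring ℤ[x_1^{±1},…,x_m^{±1}] of Laurent polynomials over ℤ, as a subring of the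
rational function field. -/
def LaurentSR (m : ℕ) : Subring (KK m) :=
  Subring.closure (Set.range (Xv m) ∪ Set.range fun i => (Xv m i)⁻¹)

/-- The ring Λ_m^± = ℤ[x_1^{±1},…,x_m^{±1}]^{S_m} of symmetric Laurent polynomials. -/
def SymLaurentSR (m : ℕ) : Subring (KK m) where
  carrier := {f | f ∈ LaurentSR m ∧ ∀ σ : Equiv.Perm (Fin m), permMap m σ f = f}
  one_mem' := ⟨one_mem _, fun σ => map_one _⟩
  mul_mem' := fun ha hb => ⟨mul_mem ha.1 hb.1, fun σ => by rw [map_mul, ha.2, hb.2]⟩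
  add_mem' := fun ha hb => ⟨add_mem ha.1 hb.1, fun σ => by rw [map_add, ha.2, hb.2]⟩
  zero_mem' := ⟨zero_mem _, fun σ => map_zero _⟩
  neg_mem' := fun ha => ⟨neg_mem ha.1, fun σ => by rw [map_neg, ha.2]⟩

/-!
Every `x i` is a root of `∏ l, (t - x l) = ∑ j, (-1)^j e_j t^(m-j)`, so lowering one exponent
of an alternant by `j` and summing with weights `(-1)^j e_j` gives zero. For the `H_k` this is
the recurrence `∑_{j=0}^m (-1)^j e_j H_{k-j} = 0` for all `k ∈ ℤ` (when `m ≥ 1`), with `H_0 = 1`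
and `H_k = 0` for `-m < k < 0`. It expresses `e_1, …, e_m` triangularly through the `H_k`, gives
`e_m⁻¹ = ±H_{-m}`, and, since `e_0 = 1` and `e_m` is a unit, can be run in both directions from
the window `H_{1-m}, …, H_0`. So the `H_k` generate `ℤ[e_1, …, e_m, e_m⁻¹]`, which is `Λ_m^±`:
a symmetric Laurent polynomial times a power of `e_m = x_1 ⋯ x_m` is a symmetric polynomial,
hence a polynomial in the `e_j`.
-/

theorem Multiset.esymm_zero {R : Type*} [CommSemiring R] (s : Multiset R) : s.esymm 0 = 1 := by
  simp [esymm, powersetCard_zero_left]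

theorem Multiset.esymm_eq_zero_of_card_lt {R : Type*} [CommSemiring R] {s : Multiset R} {n : ℕ}
    (h : card s < n) : s.esymm n = 0 := by
  simp [esymm, powersetCard_eq_empty _ h]

theorem Finset.esymm_map_univ_card {ι R : Type*} [Fintype ι] [CommSemiring R] (x : ι → R) :
    (univ.val.map x).esymm (Fintype.card ι) = ∏ i, x i := by
  rw [Finset.esymm_map_val, ← card_univ, powersetCard_self, sum_singleton]

theorem Multiset.prod_map_sub_eq_sum_esymm {R : Type*} [CommRing R] (s : Multiset R) (u : R) :
    (s.map (u - ·)).prod =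
      ∑ j ∈ Finset.range (card s + 1), (-1) ^ j * s.esymm j * u ^ (card s - j) := by
  simpa [Polynomial.eval_multiset_prod, Polynomial.eval_finsetSum, mul_assoc] using
    congrArg (Polynomial.eval u) s.prod_X_sub_X_eq_sum_esymm

theorem Multiset.sum_esymm_mul_zpow_eq_zero (s : Multiset F) {u : F} (hu : u ≠ 0) (hs : u ∈ s) :
    ∑ j ∈ Finset.range (card s + 1), (-1) ^ j * s.esymm j * u ^ (-(j : ℤ)) = 0 := by
  have hprod : (s.map (u - ·)).prod = 0 :=
    prod_eq_zero (mem_map.2 ⟨u, hs, sub_self u⟩)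
  rw [prod_map_sub_eq_sum_esymm] at hprod
  refine (mul_eq_zero.1 ?_).resolve_left (pow_ne_zero (card s) hu)
  rw [← hprod, Finset.mul_sum]
  refine Finset.sum_congr rfl fun j hj => ?_
  have hj : j ≤ card s := Nat.lt_succ_iff.1 (Finset.mem_range.1 hj)
  rw [pow_sub₀ u hu hj, zpow_neg, zpow_natCast]
  ring

theorem Subring.neg_one_pow_mul_mem_iff {R : Type*} [Ring R] {S : Subring R} (n : ℕ) {a : R} :
    (-1) ^ n * a ∈ S ↔ a ∈ S := by
  rcases neg_one_pow_eq_or R n with h | h <;> simp [h]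

theorem Subring.mem_of_linear_recurrence {R : Type*} [CommRing R] {S : Subring R} {m : ℕ}
    (hm : 0 < m) {c : ℕ → R} {h : ℤ → R} (hc : ∀ j ≤ m, c j ∈ S) (hc₀ : c 0 = 1) {u : R}
    (hu : u ∈ S) (hum : u * c m = 1) (hrec : ∀ k : ℤ, ∑ j ∈ range (m + 1), c j * h (k - j) = 0)
    (hinit : ∀ i : ℤ, -(m : ℤ) < i → i ≤ 0 → h i ∈ S) (k : ℤ) : h k ∈ S := by
  let window (k : ℤ) : Prop := ∀ i : ℤ, k - m < i → i ≤ k → h i ∈ S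
  have hup {k : ℤ} (hk : window k) : window (k + 1) := by
    intro i hi hi'
    rcases hi'.lt_or_eq with hi' | rfl
    · exact hk i (by omega) (by omega)
    have hk' := hrec (k + 1)
    rw [sum_range_succ', hc₀, one_mul, Nat.cast_zero, sub_zero] at hk'
    rw [eq_neg_of_add_eq_zero_right hk']
    refine neg_mem (sum_mem fun j hj => mul_mem (hc _ (mem_range.1 hj)) (hk _ ?_ ?_)) <;>
      push_cast <;> grind
  have hdown {k : ℤ} (hk : window k) : window (k - 1) := by
    intro i hi hi'
    by_cases hik : k - m < i
    · exact hk i hik (by omega)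
    have hk' := hrec k
    rw [sum_range_succ] at hk'
    rw [show i = k - m by omega, ← one_mul (h _), ← hum, mul_assoc,
      eq_neg_of_add_eq_zero_right hk']
    exact mul_mem hu (neg_mem (sum_mem fun j hj =>
      mul_mem (hc j (mem_range.1 hj).le) (hk _ (by grind) (by grind))))
  have hwindow (k : ℤ) : window k := by
    induction k using Int.induction_on with
    | zero => exact fun i hi => hinit i (by omega)
    | succ k hk => exact hup hk
    | pred k hk => exact hdown hk
  exact hwindow k k (by omega) le_rfl

theorem MvPolynomial.mem_closure_range_iff_exists_aeval {σ R : Type*} [CommRing R]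
    [Algebra ℤ R] {x : σ → R} {f : R} :
    f ∈ Subring.closure (Set.range x) ↔ ∃ p : MvPolynomial σ ℤ, aeval x p = f := by
  refine ⟨fun hf => ?_, ?_⟩
  · have hle : Subring.closure (Set.range x) ≤ (aeval (R := ℤ) x).range.toSubring :=
      Subring.closure_le.2 (Set.range_subset_iff.2 fun i => ⟨X i, aeval_X x i⟩)
    exact hle hf
  · rintro ⟨p, rfl⟩
    induction p using MvPolynomial.induction_on with
    | C a =>
      rw [aeval_C, eq_intCast]
      exact intCast_mem _ a
    | add p q hp hq => rw [map_add]; exact add_mem hp hq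
    | mul_X p i hp => rw [map_mul, aeval_X]; exact mul_mem hp (Subring.subset_closure ⟨i, rfl⟩)

theorem exists_prod_pow_mul_mem_closure_range {ι : Type*} [Fintype ι] [DecidableEq ι]
    {x : ι → F} (hx : ∀ i, x i ≠ 0) {f : F}
    (hf : f ∈ Subring.closure (Set.range x ∪ Set.range fun i => (x i)⁻¹)) :
    ∃ N : ℕ, (∏ i, x i) ^ N * f ∈ Subring.closure (Set.range x) := by
  have hX (i : ι) : x i ∈ Subring.closure (Set.range x) := Subring.subset_closure ⟨i, rfl⟩
  have hP : ∏ i, x i ∈ Subring.closure (Set.range x) := prod_mem fun i _ => hX i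
  induction hf using Subring.closure_induction with
  | mem f hf =>
    rcases hf with ⟨i, rfl⟩ | ⟨i, rfl⟩
    · exact ⟨0, by simpa using hX i⟩
    · refine ⟨1, ?_⟩
      rw [pow_one, ← mul_prod_erase univ x (mem_univ i), mul_right_comm,
        mul_inv_cancel₀ (hx i), one_mul]
      exact prod_mem fun j _ => hX j
  | zero => exact ⟨0, by simp⟩
  | one => exact ⟨0, by simp⟩
  | add f g _ _ hf hg =>
    obtain ⟨N₁, hf⟩ := hf
    obtain ⟨N₂, hg⟩ := hg
    refine ⟨N₁ + N₂, ?_⟩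
    rw [show (∏ i, x i) ^ (N₁ + N₂) * (f + g) =
      (∏ i, x i) ^ N₂ * ((∏ i, x i) ^ N₁ * f) + (∏ i, x i) ^ N₁ * ((∏ i, x i) ^ N₂ * g) by ring]
    exact add_mem (mul_mem (pow_mem hP _) hf) (mul_mem (pow_mem hP _) hg)
  | neg f _ hf =>
    obtain ⟨N, hf⟩ := hf
    exact ⟨N, by simpa only [mul_neg] using neg_mem hf⟩
  | mul f g _ _ hf hg =>
    obtain ⟨N₁, hf⟩ := hf
    obtain ⟨N₂, hg⟩ := hg
    refine ⟨N₁ + N₂, ?_⟩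
    rw [show (∏ i, x i) ^ (N₁ + N₂) * (f * g) = ((∏ i, x i) ^ N₁ * f) * ((∏ i, x i) ^ N₂ * g) by
      ring]
    exact mul_mem hf hg

section Alternant

variable {m : ℕ}

theorem altSum_eq_det (x : Fin m → F) (a : Fin m → ℤ) :
    altSum x a = (Matrix.of fun i j => x i ^ a j).det := by
  simp [altSum, Matrix.det_apply, Units.smul_def, zsmul_eq_mul]

theorem altSum_eq_zero_of_eq (x : Fin m → F) {a : Fin m → ℤ} {i j : Fin m} (hij : i ≠ j)
    (h : a i = a j) : altSum x a = 0 := by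
  rw [altSum_eq_det]
  exact Matrix.det_zero_of_column_eq hij fun k => by simp [h]

theorem Vand_eq_det_vandermonde (x : Fin m → F) :
    Vand x = (Matrix.vandermonde (x ∘ Fin.rev)).det := by
  let e : Fin m × Fin m ≃ Fin m × Fin m :=
    (Equiv.prodComm _ _).trans (Fin.revPerm.prodCongr Fin.revPerm)
  rw [Matrix.det_vandermonde, Vand, prod_filter, ← e.prod_comp, Fintype.prod_prod_type]
  refine prod_congr rfl fun i _ => ?_
  rw [← prod_filter]
  congr 1
  ext j
  simp [e, Fin.rev_lt_rev]

theorem altSum_staircase (x : Fin m → F) : altSum x (fun i => (m : ℤ) - 1 - i) = Vand x := by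
  rw [altSum_eq_det, Vand_eq_det_vandermonde, ← Matrix.det_submatrix_equiv_self Fin.revPerm]
  congr 1
  ext i j
  simp [Fin.val_rev]

theorem Vand_ne_zero {x : Fin m → F} (hx : Function.Injective x) : Vand x ≠ 0 := by
  rw [Vand_eq_det_vandermonde, Matrix.det_vandermonde_ne_zero_iff]
  exact hx.comp Fin.rev_injective

theorem Hch_zero {x : Fin m → F} (hx : Function.Injective x) : Hch x 0 = 1 := by
  simp only [Hch, Eul, ite_self, zero_add]
  exact (altSum_staircase x).symm ▸ div_self (Vand_ne_zero hx)

theorem Hch_eq_zero (x : Fin m → F) {k : ℤ} (hk : -(m : ℤ) < k) (hk' : k < 0) :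
    Hch x k = 0 := by
  have hm : 0 < m := by omega
  rw [Hch, Eul, altSum_eq_zero_of_eq x (i := ⟨0, hm⟩) (j := ⟨(-k).toNat, by omega⟩)
    (Fin.ne_of_val_ne (by dsimp only; omega)) (by dsimp only; split_ifs <;> omega), zero_div]

end Alternant

section Recurrence

variable {m : ℕ} {x : Fin m → F}

theorem prod_zpow_sub_ite (hx : ∀ i, x i ≠ 0) (σ : Equiv.Perm (Fin m)) (a : Fin m → ℤ)
    (i₀ : Fin m) (j : ℤ) :
    ∏ i, x (σ i) ^ (a i - if i = i₀ then j else 0) = (∏ i, x (σ i) ^ a i) * x (σ i₀) ^ (-j) := by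
  have hsingle : ∏ i, x (σ i) ^ (if i = i₀ then j else 0) = x (σ i₀) ^ j := by
    rw [← Fintype.prod_ite_eq' i₀ fun i => x (σ i) ^ j]
    exact prod_congr rfl fun i _ => by split_ifs <;> simp
  simp_rw [zpow_sub₀ (hx _), prod_div_distrib, hsingle, zpow_neg, div_eq_mul_inv]

theorem sum_esymm_mul_altSum_sub (hx : ∀ i, x i ≠ 0) (a : Fin m → ℤ) (i₀ : Fin m) :
    ∑ j ∈ range (m + 1), (-1) ^ j * (univ.val.map x).esymm j *
      altSum x (fun i => a i - if i = i₀ then (j : ℤ) else 0) = 0 := by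
  simp only [altSum, mul_sum]
  rw [sum_comm]
  refine sum_eq_zero fun σ _ => ?_
  have h := (univ.val.map x).sum_esymm_mul_zpow_eq_zero (hx (σ i₀))
    (Multiset.mem_map_of_mem x (mem_univ (σ i₀)))
  rw [Multiset.card_map, card_val, card_univ, Fintype.card_fin] at h
  calc _ = ((Equiv.Perm.sign σ : ℤ) : F) * (∏ i, x (σ i) ^ a i) *
        ∑ j ∈ range (m + 1), (-1) ^ j * (univ.val.map x).esymm j * x (σ i₀) ^ (-(j : ℤ)) := by
        rw [mul_sum]
        refine sum_congr rfl fun j _ => ?_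
        rw [prod_zpow_sub_ite hx]
        ring
    _ = 0 := by rw [h, mul_zero]

theorem sum_esymm_mul_Hch (hx : ∀ i, x i ≠ 0) (hm : 0 < m) (k : ℤ) :
    ∑ j ∈ range (m + 1), (-1) ^ j * (univ.val.map x).esymm j * Hch x (k - j) = 0 := by
  have hexp (j : ℕ) : Hch x (k - j) = altSum x (fun i =>
      ((if (i : ℕ) = 0 then k else 0) + ((m : ℤ) - 1 - i)) - if i = ⟨0, hm⟩ then (j : ℤ) else 0)
      / Vand x := by
    simp only [Hch, Eul, Fin.ext_iff]
    congr 2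
    funext i
    split_ifs <;> ring
  simp only [hexp, mul_div_assoc', ← sum_div, sum_esymm_mul_altSum_sub hx, zero_div]

end Recurrence

section Generation

variable {m : ℕ}

def esymmInvClosure (x : Fin m → F) : Subring F :=
  Subring.closure (insert ((univ.val.map x).esymm m)⁻¹ (Set.range (univ.val.map x).esymm))

theorem esymm_mem_esymmInvClosure (x : Fin m → F) (j : ℕ) :
    (univ.val.map x).esymm j ∈ esymmInvClosure x :=
  Subring.subset_closure (.inr ⟨j, rfl⟩)

theorem inv_esymm_mem_esymmInvClosure (x : Fin m → F) :
    ((univ.val.map x).esymm m)⁻¹ ∈ esymmInvClosure x :=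
  Subring.subset_closure (.inl rfl)

variable {x : Fin m → F}

theorem esymm_mem_closure_range_Hch (hinj : Function.Injective x) (hx : ∀ i, x i ≠ 0) {n : ℕ}
    (hn : n ≤ m) : (univ.val.map x).esymm n ∈ Subring.closure (Set.range (Hch x)) := by
  induction n using Nat.strong_induction_on with
  | _ n ih =>
  rcases n.eq_zero_or_pos with rfl | hn₀
  · rw [Multiset.esymm_zero]
    exact one_mem _
  have hrec := sum_esymm_mul_Hch hx (hn₀.trans_le hn) n
  rw [← sum_subset (range_subset_range.2 (Nat.succ_le_succ hn)) fun j hj hj' => by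
    rw [Hch_eq_zero x (by grind) (by grind), mul_zero], sum_range_succ, sub_self,
    Hch_zero hinj, mul_one] at hrec
  rw [← Subring.neg_one_pow_mul_mem_iff n, eq_neg_of_add_eq_zero_right hrec]
  refine neg_mem (sum_mem fun j hj => mul_mem ?_ (Subring.subset_closure ⟨_, rfl⟩))
  exact (Subring.neg_one_pow_mul_mem_iff j).2 (ih j (mem_range.1 hj) (by grind))

theorem esymm_card_mul_Hch_neg (hinj : Function.Injective x) (hx : ∀ i, x i ≠ 0) (hm : 0 < m) :
    (univ.val.map x).esymm m * ((-1) ^ (m + 1) * Hch x (-m)) = 1 := by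
  have hrec := sum_esymm_mul_Hch hx hm 0
  rw [sum_range_succ, sum_eq_single_of_mem 0 (mem_range.2 hm) fun j hj hj₀ => by
    rw [Hch_eq_zero x (by grind) (by grind), mul_zero]] at hrec
  simp only [pow_zero, Multiset.esymm_zero, Nat.cast_zero, sub_zero, Hch_zero hinj,
    zero_sub] at hrec
  linear_combination -hrec

theorem inv_esymm_card_mem_closure_range_Hch (hinj : Function.Injective x)
    (hx : ∀ i, x i ≠ 0) :
    ((univ.val.map x).esymm m)⁻¹ ∈ Subring.closure (Set.range (Hch x)) := by
  rcases m.eq_zero_or_pos with rfl | hm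
  · simp [Multiset.esymm_zero]
  rw [inv_eq_of_mul_eq_one_right (esymm_card_mul_Hch_neg hinj hx hm),
    Subring.neg_one_pow_mul_mem_iff]
  exact Subring.subset_closure ⟨_, rfl⟩

theorem Hch_mem_esymmInvClosure (hinj : Function.Injective x) (hx : ∀ i, x i ≠ 0) (k : ℤ) :
    Hch x k ∈ esymmInvClosure x := by
  rcases m.eq_zero_or_pos with rfl | hm
  · -- with no variables every `H_k` is `1`
    simp [Hch, Eul, altSum, Vand]
  have he : (univ.val.map x).esymm m ≠ 0 :=
    left_ne_zero_of_mul_eq_one (esymm_card_mul_Hch_neg hinj hx hm)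
  refine Subring.mem_of_linear_recurrence hm (c := fun j => (-1) ^ j * (univ.val.map x).esymm j)
    (u := (-1) ^ m * ((univ.val.map x).esymm m)⁻¹)
    (fun j _ => (Subring.neg_one_pow_mul_mem_iff j).2 (esymm_mem_esymmInvClosure x j))
    (by simp [Multiset.esymm_zero])
    ((Subring.neg_one_pow_mul_mem_iff m).2 (inv_esymm_mem_esymmInvClosure x)) ?_
    (fun k => by simpa only [mul_assoc] using sum_esymm_mul_Hch hx hm k) (fun i hi hi' => ?_) k
  · rw [mul_mul_mul_comm, ← mul_pow, neg_one_mul, neg_neg, one_pow, one_mul, inv_mul_cancel₀ he]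
  · rcases hi'.lt_or_eq with hi' | rfl
    · rw [Hch_eq_zero x hi hi']
      exact zero_mem _
    · rw [Hch_zero hinj]
      exact one_mem _

theorem closure_range_Hch_eq_esymmInvClosure (hinj : Function.Injective x) (hx : ∀ i, x i ≠ 0) :
    Subring.closure (Set.range (Hch x)) = esymmInvClosure x := by
  refine le_antisymm
    (Subring.closure_le.2 (Set.range_subset_iff.2 (Hch_mem_esymmInvClosure hinj hx)))
    (Subring.closure_le.2 (Set.insert_subset_iff.2
      ⟨inv_esymm_card_mem_closure_range_Hch hinj hx, Set.range_subset_iff.2 fun n => ?_⟩))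
  rcases le_or_gt n m with hn | hn
  · exact esymm_mem_closure_range_Hch hinj hx hn
  · rw [Multiset.esymm_eq_zero_of_card_lt (by simpa using hn)]
    exact zero_mem _

end Generation

section RationalFunctions

variable {m : ℕ}

theorem Xv_injective : Function.Injective (Xv m) :=
  (IsFractionRing.injective _ _).comp MvPolynomial.X_injective

theorem Xv_ne_zero (i : Fin m) : Xv m i ≠ 0 :=
  IsFractionRing.to_map_ne_zero_of_mem_nonZeroDivisors
    (mem_nonZeroDivisors_of_ne_zero (MvPolynomial.X_ne_zero i))

theorem aeval_Xv (p : MvPolynomial (Fin m) ℤ) :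
    MvPolynomial.aeval (Xv m) p =
      algebraMap (MvPolynomial (Fin m) ℚ) (KK m) (MvPolynomial.map (Int.castRingHom ℚ) p) := by
  induction p using MvPolynomial.induction_on with
  | C a => simp
  | add p q hp hq => simp [hp, hq]
  | mul_X p i hp => simp [hp, Xv]

theorem aeval_Xv_injective : Function.Injective (MvPolynomial.aeval (R := ℤ) (Xv m)) := by
  intro p q h
  simp only [aeval_Xv] at h
  exact MvPolynomial.map_injective _ Int.cast_injective (IsFractionRing.injective _ _ h)

theorem permMap_aeval_Xv (σ : Equiv.Perm (Fin m)) (p : MvPolynomial (Fin m) ℤ) :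
    permMap m σ (MvPolynomial.aeval (Xv m) p) =
      MvPolynomial.aeval (Xv m) (MvPolynomial.rename σ p) := by
  simp [aeval_Xv, permMap, MvPolynomial.map_rename]

theorem permMap_Xv (σ : Equiv.Perm (Fin m)) (i : Fin m) : permMap m σ (Xv m i) = Xv m (σ i) := by
  simpa using permMap_aeval_Xv σ (MvPolynomial.X i)

theorem mem_SymLaurentSR {f : KK m} :
    f ∈ SymLaurentSR m ↔ f ∈ LaurentSR m ∧ ∀ σ, permMap m σ f = f :=
  Iff.rfl

theorem esymm_Xv_eq_aeval (j : ℕ) :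
    (univ.val.map (Xv m)).esymm j = MvPolynomial.aeval (Xv m) (MvPolynomial.esymm (Fin m) ℤ j) :=
  (MvPolynomial.aeval_esymm_eq_multiset_esymm _ _ _ _).symm

theorem esymm_Xv_card : (univ.val.map (Xv m)).esymm m = ∏ i, Xv m i := by
  simpa using Finset.esymm_map_univ_card (Xv m)

theorem esymm_Xv_mem_SymLaurentSR (j : ℕ) : (univ.val.map (Xv m)).esymm j ∈ SymLaurentSR m := by
  rw [esymm_Xv_eq_aeval]
  refine mem_SymLaurentSR.2 ⟨Subring.closure_mono Set.subset_union_left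
    (MvPolynomial.mem_closure_range_iff_exists_aeval.2 ⟨_, rfl⟩), fun σ => ?_⟩
  rw [permMap_aeval_Xv, MvPolynomial.rename_esymm]

theorem inv_esymm_Xv_card_mem_SymLaurentSR :
    ((univ.val.map (Xv m)).esymm m)⁻¹ ∈ SymLaurentSR m := by
  refine mem_SymLaurentSR.2
    ⟨?_, fun σ => by rw [map_inv₀, (mem_SymLaurentSR.1 (esymm_Xv_mem_SymLaurentSR m)).2 σ]⟩
  rw [esymm_Xv_card, ← prod_inv_distrib]
  exact prod_mem fun i _ => Subring.subset_closure (.inr ⟨i, rfl⟩)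

theorem SymLaurentSR_le_esymmInvClosure : SymLaurentSR m ≤ esymmInvClosure (Xv m) := by
  intro f hf
  obtain ⟨hfL, hfS⟩ := mem_SymLaurentSR.1 hf
  obtain ⟨N, hN⟩ := exists_prod_pow_mul_mem_closure_range Xv_ne_zero hfL
  obtain ⟨G, hG⟩ := MvPolynomial.mem_closure_range_iff_exists_aeval.1 hN
  have hGsymm : G.IsSymmetric := fun σ => aeval_Xv_injective (by
    rw [← permMap_aeval_Xv, hG, map_mul, map_pow, map_prod, hfS σ]
    simp only [permMap_Xv, Equiv.prod_comp])
  obtain ⟨Q, hQ⟩ := MvPolynomial.esymmAlgHom_surjective ℤ (Fintype.card_fin m).le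
    ⟨G, (MvPolynomial.mem_symmetricSubalgebra G).2 hGsymm⟩
  have hGQ : MvPolynomial.aeval (Xv m) G =
      MvPolynomial.aeval (fun i : Fin m => (univ.val.map (Xv m)).esymm (i + 1)) Q := by
    have hGval : MvPolynomial.aeval (fun i : Fin m => MvPolynomial.esymm (Fin m) ℤ (i + 1)) Q = G :=
      (MvPolynomial.esymmAlgHom_apply Q).symm.trans (congrArg Subtype.val hQ)
    rw [← hGval, MvPolynomial.comp_aeval_apply]
    simp only [← esymm_Xv_eq_aeval]
  have hf : f = ((univ.val.map (Xv m)).esymm m)⁻¹ ^ N * MvPolynomial.aeval (Xv m) G := by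
    rw [hG, esymm_Xv_card, ← mul_assoc, ← mul_pow,
      inv_mul_cancel₀ (prod_ne_zero_iff.2 fun i _ => Xv_ne_zero i), one_pow, one_mul]
  rw [hf, hGQ]
  refine mul_mem (pow_mem (inv_esymm_mem_esymmInvClosure _) N) (Subring.closure_mono ?_
    (MvPolynomial.mem_closure_range_iff_exists_aeval.2 ⟨Q, rfl⟩))
  exact Set.range_subset_iff.2 fun i => Set.mem_insert_of_mem _ ⟨_, rfl⟩

theorem SymLaurentSR_eq_esymmInvClosure : SymLaurentSR m = esymmInvClosure (Xv m) :=
  le_antisymm SymLaurentSR_le_esymmInvClosure (Subring.closure_le.2 (Set.insert_subset_iff.2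
    ⟨inv_esymm_Xv_card_mem_SymLaurentSR, Set.range_subset_iff.2 esymm_Xv_mem_SymLaurentSR⟩))

end RationalFunctions

/-- the H_k, k ∈ ℤ, generate Λ_m^± as a ring. -/
theorem euler_H_generate (m : ℕ) :
    Subring.closure (Set.range fun k : ℤ => Hch (Xv m) k) = SymLaurentSR m := by
  rw [SymLaurentSR_eq_esymmInvClosure]
  exact closure_range_Hch_eq_esymmInvClosure Xv_injective Xv_ne_zero

end
end

section
/- Column-deletion minor identity: let A be an n×(n+1) matrix over a commutative ring with columns A_1,...,A_{n+1}. For 1 ≤ l ≤ n+1 let A^{(l)} be the n×n matrix obtained by deleting column A_l, and for a subset I ⊆ {1,...,n} let A(I) be the n×n matrix whose i-th row equals the i-th row of A^{(n+1)} if i ∈ I and the i-th row of A^{(1)} otherwise. Then det A^{(l)} = ∑_{I ⊆ {1,...,n}, |I| = l-1} det A(I). -/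
/-!
Let `P(x) = x • A^{(n+1)} + A^{(1)}`, the matrix whose `j`-th column is `x • A_j + A_{j+1}`.
Expanding `det P(x)` multilinearly in the rows gives `∑_I x^{|I|} det A(I)`. Expanding it in the
columns, a choice of `A_j` or `A_{j+1}` for each column contributes only if no column of `A` is
chosen twice, i.e. if `A_j` is chosen exactly for `j < m`; the chosen columns are then those of
`A^{(m)}`, so `det P(x) = ∑_m x^{m-1} det A^{(m)}`. Comparing coefficients of `x^{l-1}` in
`R[X]` gives the identity.
-/

open Finset Polynomial

theorem Fin.eq_filter_val_lt_card {n : ℕ} {s : Finset (Fin n)}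
    (hs : ∀ j k : Fin n, j.succ = k.castSucc → k ∈ s → j ∈ s) :
    s = ({j | (j : ℕ) < #s} : Finset (Fin n)) := by
  have hlower (d : ℕ) : ∀ j k : Fin n, (k : ℕ) = j + d → k ∈ s → j ∈ s := by
    induction d with
    | zero => intro j k h hk; rwa [Fin.ext (h.trans (add_zero _))] at hk
    | succ d ih =>
      intro j k h hk
      exact ih j ⟨j + d, by omega⟩ rfl (hs _ k (Fin.ext (by simp; omega)) hk)
  ext j
  rw [mem_filter_univ]
  have := Fin.lt_card_filter_univ_iff_apply_of_imp (j := j) (· ∈ s)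
    fun k j hjk hk => hlower (k - j) j k (by omega) hk
  simpa using this.symm

namespace Matrix

variable {R : Type*} [CommRing R]

theorem det_smul_add_eq_sum {ι : Type*} [Fintype ι] [DecidableEq ι] (x : R)
    (M N : Matrix ι ι R) :
    (x • M + N).det =
      ∑ s : Finset ι, x ^ #s * (of fun i j => if i ∈ s then M i j else N i j).det := by
  let P (s : Finset ι) : ι → ι → R := fun i j => if i ∈ s then M i j else N i j
  have hP (s : Finset ι) : s.piecewise (x • M) N = s.piecewise (fun i => x • P s i) (P s) := by
    funext i
    by_cases hi : i ∈ s
    · simp only [Finset.piecewise, P, if_pos hi]; rfl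
    · simp only [Finset.piecewise, P, if_neg hi]
  calc (x • M + N).det = ∑ s : Finset ι, detRowAlternating (s.piecewise (x • M) N) :=
        detRowAlternating.toMultilinearMap.map_add_univ (x • M) N
    _ = ∑ s : Finset ι, x ^ #s * (of (P s)).det := by
      refine sum_congr rfl fun s _ => ?_
      rw [hP]
      exact (detRowAlternating.toMultilinearMap.map_piecewise_smul (fun _ => x) (P s) s).trans
        (by rw [prod_const, smul_eq_mul]; rfl)

theorem det_of_ite_castSucc_succ_eq_zero {n : ℕ} (A : Matrix (Fin n) (Fin (n + 1)) R)
    {s : Finset (Fin n)} {j k : Fin n} (hj : j ∉ s) (hk : k ∈ s) (hjk : j.succ = k.castSucc) :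
    (of fun i l => if l ∈ s then A i l.castSucc else A i l.succ).det = 0 :=
  det_zero_of_column_eq (i := j) (j := k) (fun h => hj (h ▸ hk)) fun i => by simp [hj, hk, hjk]

theorem det_smul_submatrix_castSucc_add_submatrix_succ {n : ℕ}
    (A : Matrix (Fin n) (Fin (n + 1)) R) (x : R) :
    (x • A.submatrix id Fin.castSucc + A.submatrix id Fin.succ).det =
      ∑ m : Fin (n + 1), x ^ (m : ℕ) * (A.submatrix id m.succAbove).det := by
  let B (s : Finset (Fin n)) : Matrix (Fin n) (Fin n) R :=
    of fun i l => if l ∈ s then A i l.castSucc else A i l.succ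
  let D (m : Fin (n + 1)) : Finset (Fin n) := {j | (j : ℕ) < m}
  have hcard (m : Fin (n + 1)) : #(D m) = m := by
    rw [Fin.card_filter_val_lt]; omega
  have hD (m : Fin (n + 1)) : B (D m) = A.submatrix id m.succAbove := by
    ext i l
    simp [B, D, Fin.succAbove, Fin.lt_def, apply_ite (A i)]
  have hzero (s : Finset (Fin n)) (hs : s ∉ univ.image D) : (B s).det = 0 := by
    by_contra hdet
    refine hs (mem_image.2 ⟨⟨#s, ?_⟩, mem_univ _, (Fin.eq_filter_val_lt_card ?_).symm⟩)
    · exact Nat.lt_succ_of_le (card_le_univ s |>.trans (Fintype.card_fin n).le)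
    · intro j k hjk hk
      by_contra hj
      exact hdet (det_of_ite_castSucc_succ_eq_zero A hj hk hjk)
  calc (x • A.submatrix id Fin.castSucc + A.submatrix id Fin.succ).det
      = (x • (A.submatrix id Fin.castSucc)ᵀ + (A.submatrix id Fin.succ)ᵀ).det := by
        rw [← det_transpose, transpose_add, transpose_smul]
    _ = ∑ s, x ^ #s * (B s).det := by
        rw [det_smul_add_eq_sum]
        simp_rw [← det_transpose (B _)]
        rfl
    _ = ∑ s ∈ univ.image D, x ^ #s * (B s).det :=
        (sum_subset (subset_univ _) fun s _ hs => by rw [hzero s hs, mul_zero]).symm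
    _ = ∑ m : Fin (n + 1), x ^ (m : ℕ) * (A.submatrix id m.succAbove).det := by
        rw [sum_image fun m _ m' _ h => Fin.ext (by rw [← hcard m, ← hcard m', h])]
        simp only [hcard, hD]

theorem sum_pow_mul_det_submatrix_succAbove {n : ℕ} (A : Matrix (Fin n) (Fin (n + 1)) R)
    (x : R) :
    ∑ m : Fin (n + 1), x ^ (m : ℕ) * (A.submatrix id m.succAbove).det =
      ∑ I : Finset (Fin n),
        x ^ #I * (of fun i j : Fin n => if i ∈ I then A i j.castSucc else A i j.succ).det :=
  (det_smul_submatrix_castSucc_add_submatrix_succ A x).symm.trans (det_smul_add_eq_sum x _ _)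

end Matrix

theorem Polynomial.coeff_sum_X_pow_mul_C {R ι : Type*} [Semiring R] (s : Finset ι) (e : ι → ℕ)
    (a : ι → R) (k : ℕ) :
    (∑ i ∈ s, X ^ e i * C (a i)).coeff k = ∑ i ∈ s with e i = k, a i := by
  simp only [finsetSum_coeff, X_pow_mul, coeff_C_mul_X_pow, sum_filter, eq_comm]

/-- column-deletion minor identity. For an n×(n+1) matrix A,
the determinant of A with column l deleted equals the sum, over subsets I of the rows
of cardinality l (0-based; this is l-1 in 1-based numbering), of the determinants of
the matrices mixing rows of A with the last column deleted (rows in I) and of A with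
the first column deleted (rows not in I). -/
theorem column_deletion_minor_identity {R : Type*} [CommRing R] {n : ℕ}
    (A : Matrix (Fin n) (Fin (n + 1)) R) (l : Fin (n + 1)) :
    (A.submatrix id l.succAbove).det =
      ∑ I ∈ Finset.powersetCard (l : ℕ) (Finset.univ : Finset (Fin n)),
        (Matrix.of fun i j : Fin n =>
          if i ∈ I then A i j.castSucc else A i j.succ).det := by
  have hC (M : Matrix (Fin n) (Fin n) R) : (M.map C).det = C M.det := (RingHom.map_det C M).symm
  have hrow (I : Finset (Fin n)) :
      (Matrix.of fun i j : Fin n => if i ∈ I then A.map C i j.castSucc else A.map C i j.succ).det =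
        C (Matrix.of fun i j : Fin n => if i ∈ I then A i j.castSucc else A i j.succ).det := by
    rw [← hC]
    congr
    ext i j
    simp [apply_ite C]
  have key := congrArg (coeff · (l : ℕ))
    (Matrix.sum_pow_mul_det_submatrix_succAbove (A.map C) (X : R[X]))
  simp only [Matrix.submatrix_map, hC, hrow, coeff_sum_X_pow_mul_C] at key
  rw [powersetCard_eq_filter, powerset_univ, ← key]
  simp [Fin.val_inj, filter_eq']
end

section
/- For any sequence of integers λ_1,...,λ_{m+1}, the (m+1)×(m+1) determinant det(H_{λ_i - i + j}(x,y))_{1≤i,j≤m+1} = 0, where H_k(x,y) are the supersymmetric Euler functions with m x-variables and n y-variables. -/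
open Finset

noncomputable section

variable {F : Type*} [Field F]

/-- h_k(x,y): coefficients of the expansion of ∏(1-y_j t)/∏(1-x_i t) at t = 0
(zero for negative index). -/
def hsup {m n : ℕ} (x : Fin m → F) (y : Fin n → F) (k : ℤ) : F :=
  if k < 0 then 0 else
    PowerSeries.coeff (R := F) k.toNat
      ((∏ j : Fin n, (1 - PowerSeries.C (R := F) (y j) * PowerSeries.X)) *
        (∏ i : Fin m, (1 - PowerSeries.C (R := F) (x i) * PowerSeries.X))⁻¹)

/-- h_k^{(∞)}(x,y): coefficients of the expansion of ∏(1-y_j t)/∏(1-x_i t) at t = ∞,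
given by h_k^{(∞)} = (-1)^{n-m} (y_1⋯y_n)/(x_1⋯x_m) · h*_{n-m-k}. -/
def hinf {m n : ℕ} (x : Fin m → F) (y : Fin n → F) (k : ℤ) : F :=
  (-1 : F) ^ ((n : ℤ) - (m : ℤ)) * ((∏ j, y j) / ∏ i, x i) *
    hsup (fun i => (x i)⁻¹) (fun j => (y j)⁻¹) ((n : ℤ) - (m : ℤ) - k)

/-- The supersymmetric Euler functions H_k(x,y) = h_k - h_k^{(∞)}. -/
def Hsup {m n : ℕ} (x : Fin m → F) (y : Fin n → F) (k : ℤ) : F :=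
  hsup x y k - hinf x y k

/-- The field of rational functions in x_1,…,x_m, y_1,…,y_n over ℚ. -/
abbrev KS (m n : ℕ) := FractionRing (MvPolynomial (Fin m ⊕ Fin n) ℚ)

/-- The x-variables. -/
def Xs (m n : ℕ) (i : Fin m) : KS m n :=
  algebraMap (MvPolynomial (Fin m ⊕ Fin n) ℚ) (KS m n) (MvPolynomial.X (Sum.inl i))

/-- The y-variables. -/
def Ys (m n : ℕ) (j : Fin n) : KS m n :=
  algebraMap (MvPolynomial (Fin m ⊕ Fin n) ℚ) (KS m n) (MvPolynomial.X (Sum.inr j))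

/-!
Both expansions of `Q(t)/P(t)`, with `P(t) = ∏ (1 - x_i t)` and `Q(t) = ∏ (1 - y_j t)`, satisfy
`P(t) · (expansion) = Q(t)` in their respective rings, so multiplying the sequences `h_k` and
`h_k^{(∞)}` by the degree-`m` polynomial `P` yields the coefficients of `Q` in both cases.
Hence `∑_{r ≤ m} p_r H_{k-r} = 0` for all `k`, and since `p_0 = 1` the vector `(p_{m-j})_j` is a
nonzero kernel vector of the `(m+1) × (m+1)` matrix `(H_{λ_i - i + j})`.
-/

open Polynomial
open scoped PowerSeries

section CoeffInt

variable {R : Type*} [CommSemiring R]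

def PowerSeries.coeffInt (f : R⟦X⟧) (k : ℤ) : R :=
  if k < 0 then 0 else PowerSeries.coeff k.toNat f

lemma PowerSeries.coeffInt_of_neg (f : R⟦X⟧) {k : ℤ} (hk : k < 0) : f.coeffInt k = 0 :=
  if_pos hk

lemma PowerSeries.coeffInt_natCast (f : R⟦X⟧) (k : ℕ) :
    f.coeffInt k = PowerSeries.coeff k f := by
  simp [PowerSeries.coeffInt]

lemma Polynomial.coeffInt_coe (p : R[X]) (k : ℕ) : (p : R⟦X⟧).coeffInt k = p.coeff k := by
  rw [PowerSeries.coeffInt_natCast, coeff_coe]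

lemma Polynomial.coeffInt_coe_of_natDegree_lt {p : R[X]} {k : ℤ} (hk : (p.natDegree : ℤ) < k) :
    (p : R⟦X⟧).coeffInt k = 0 := by
  lift k to ℕ using by omega
  rw [coeffInt_coe, coeff_eq_zero_of_natDegree_lt (by omega)]

lemma Polynomial.sum_coeff_mul_coeffInt {p : R[X]} {m : ℕ} (hp : p.natDegree ≤ m)
    (f : R⟦X⟧) (k : ℤ) :
    ∑ r ∈ range (m + 1), p.coeff r * f.coeffInt (k - r) = ((p : R⟦X⟧) * f).coeffInt k := by
  rcases lt_or_ge k 0 with hk | hk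
  · rw [PowerSeries.coeffInt_of_neg _ hk]
    exact sum_eq_zero fun r _ => by rw [PowerSeries.coeffInt_of_neg _ (by omega), mul_zero]
  lift k to ℕ using hk
  set g : ℕ → R := fun r => p.coeff r * f.coeffInt (k - r)
  have hdeg : ∑ r ∈ range (m + 1), g r = ∑ r ∈ range (m + k + 1), g r :=
    sum_subset (range_subset_range.2 (by omega)) fun r _ hr => by
      simp only [g, coeff_eq_zero_of_natDegree_lt (show p.natDegree < r by simp at hr; omega),
        zero_mul]
  have hneg : ∑ r ∈ range (k + 1), g r = ∑ r ∈ range (m + k + 1), g r :=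
    sum_subset (range_subset_range.2 (by omega)) fun r _ hr => by
      simp only [g, PowerSeries.coeffInt_of_neg _ (show (k : ℤ) - r < 0 by simp at hr; omega),
        mul_zero]
  rw [hdeg, ← hneg, PowerSeries.coeffInt_natCast, PowerSeries.coeff_mul,
    Nat.sum_antidiagonal_eq_sum_range_succ_mk]
  refine sum_congr rfl fun r hr => ?_
  have hrk : r ≤ k := by simpa [Nat.lt_succ_iff] using hr
  simp only [g, ← PowerSeries.coeffInt_natCast, coeffInt_coe, Nat.cast_sub hrk]

end CoeffInt

section DenomPoly

variable {R : Type*} [CommRing R] {m : ℕ}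

def denomPoly (x : Fin m → R) : R[X] :=
  ∏ i, (1 - C (x i) * X)

lemma denomPoly_coe (x : Fin m → R) :
    (denomPoly x : R⟦X⟧) = ∏ i, (1 - PowerSeries.C (x i) * PowerSeries.X) := by
  rw [denomPoly, ← coeToPowerSeries.ringHom_apply, map_prod]
  simp [coeToPowerSeries.ringHom_apply]

lemma natDegree_one_sub_C_mul_X_le (a : R) : (1 - C a * X).natDegree ≤ 1 := by
  compute_degree

lemma natDegree_denomPoly_le (x : Fin m → R) : (denomPoly x).natDegree ≤ m :=
  (natDegree_prod_le _ _).trans <| by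
    simpa using sum_le_sum fun i (_ : i ∈ univ) => natDegree_one_sub_C_mul_X_le (x i)

lemma coeff_zero_denomPoly (x : Fin m → R) : (denomPoly x).coeff 0 = 1 := by
  simp [denomPoly, coeff_zero_eq_eval_zero, eval_prod]

lemma reflect_denomPoly (x : Fin m → R) : reflect m (denomPoly x) = ∏ i, (X - C (x i)) := by
  induction m with
  | zero => simp [denomPoly, reflect_one]
  | succ m ih =>
    have h := reflect_mul _ _ (natDegree_one_sub_C_mul_X_le (x 0))
      (natDegree_denomPoly_le fun i : Fin m => x i.succ)
    rw [Nat.add_comm 1 m] at h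
    rw [denomPoly, Fin.prod_univ_succ, ← denomPoly, h, ih, Fin.prod_univ_succ]
    simp [reflect_sub, reflect_one, reflect_C_mul]

end DenomPoly

section DenomPolyField

variable {m : ℕ} {x : Fin m → F}

lemma prod_X_sub_C_eq_C_mul_denomPoly (hx : ∀ i, x i ≠ 0) :
    ∏ i, (X - C (x i)) = C (∏ i, -x i) * denomPoly fun i => (x i)⁻¹ := by
  rw [denomPoly, map_prod, ← prod_mul_distrib]
  refine prod_congr rfl fun i _ => ?_
  rw [mul_sub, ← mul_assoc, ← C_mul, neg_mul, mul_inv_cancel₀ (hx i)]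
  simp only [C_neg, C_1, neg_mul, one_mul, sub_neg_eq_add, neg_add_eq_sub, mul_one]

lemma coeff_denomPoly_sub (hx : ∀ i, x i ≠ 0) {r : ℕ} (hr : r ≤ m) :
    (denomPoly x).coeff (m - r) = (∏ i, -x i) * (denomPoly fun i => (x i)⁻¹).coeff r := by
  rw [← revAt_le hr, ← coeff_reflect, reflect_denomPoly, prod_X_sub_C_eq_C_mul_denomPoly hx,
    coeff_C_mul]

lemma coeffInt_denomPoly_sub (hx : ∀ i, x i ≠ 0) (k : ℤ) :
    (denomPoly x : F⟦X⟧).coeffInt (m - k) =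
      (∏ i, -x i) * (denomPoly fun i => (x i)⁻¹ : F⟦X⟧).coeffInt k := by
  rcases lt_or_ge k 0 with hk | hk
  · rw [coeffInt_coe_of_natDegree_lt (by linarith [natDegree_denomPoly_le x]),
      PowerSeries.coeffInt_of_neg _ hk, mul_zero]
  rcases lt_or_ge (m : ℤ) k with hkm | hkm
  · rw [PowerSeries.coeffInt_of_neg _ (by omega), coeffInt_coe_of_natDegree_lt
      (by linarith [natDegree_denomPoly_le fun i => (x i)⁻¹]), mul_zero]
  lift k to ℕ using hk
  rw [← Nat.cast_sub (by omega), coeffInt_coe, coeffInt_coe, coeff_denomPoly_sub hx (by omega)]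

end DenomPolyField

section Recurrence

variable {m n : ℕ}

lemma hsup_eq_coeffInt (x : Fin m → F) (y : Fin n → F) :
    hsup x y = ((denomPoly y : F⟦X⟧) * (denomPoly x : F⟦X⟧)⁻¹).coeffInt := by
  funext k
  rw [hsup, PowerSeries.coeffInt, denomPoly_coe, denomPoly_coe]

lemma sum_coeff_denomPoly_mul_hsup (x : Fin m → F) (y : Fin n → F) (k : ℤ) :
    ∑ r ∈ range (m + 1), (denomPoly x).coeff r * hsup x y (k - r) =
      (denomPoly y : F⟦X⟧).coeffInt k := by
  have hP : PowerSeries.constantCoeff (denomPoly x : F⟦X⟧) ≠ 0 := by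
    simp [coeff_zero_denomPoly]
  rw [hsup_eq_coeffInt, sum_coeff_mul_coeffInt (natDegree_denomPoly_le x), mul_left_comm,
    PowerSeries.mul_inv_cancel _ hP, mul_one]

lemma sum_coeff_denomPoly_mul_hinf {x : Fin m → F} {y : Fin n → F}
    (hx : ∀ i, x i ≠ 0) (hy : ∀ j, y j ≠ 0) (k : ℤ) :
    ∑ r ∈ range (m + 1), (denomPoly x).coeff r * hinf x y (k - r) =
      (denomPoly y : F⟦X⟧).coeffInt k := by
  set c : F := (-1) ^ ((n : ℤ) - m) * ((∏ j, y j) / ∏ i, x i)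
  have hc : (∏ i, -x i) * c = ∏ j, -y j := by
    have hxprod : ∏ i, x i ≠ 0 := prod_ne_zero_iff.2 fun i _ => hx i
    have hsign : (-1 : F) ^ m * (-1) ^ ((n : ℤ) - m) = (-1) ^ n := by
      rw [← zpow_natCast, ← zpow_add₀ (by norm_num), ← zpow_natCast, add_sub_cancel]
    simp only [c, prod_neg, card_univ, Fintype.card_fin]
    rw [← hsign]
    field_simp
  -- Reversing the sum turns the coefficients of `P(x)` into those of `P(x⁻¹)`, and the sum
  -- becomes the recurrence of the expansion at `0` in the inverted variables.
  calc ∑ r ∈ range (m + 1), (denomPoly x).coeff r * hinf x y (k - r)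
      = ∑ r ∈ range (m + 1), (denomPoly x).coeff (m - r) * hinf x y (k - ↑(m - r)) := by
        rw [← sum_range_reflect]; rfl
    _ = ∑ r ∈ range (m + 1), ((∏ i, -x i) * c) * ((denomPoly fun i => (x i)⁻¹).coeff r *
          hsup (fun i => (x i)⁻¹) (fun j => (y j)⁻¹) (n - k - r)) := by
        refine sum_congr rfl fun r hr => ?_
        have hrm : r ≤ m := by simpa [Nat.lt_succ_iff] using hr
        have hidx : (n : ℤ) - m - (k - ↑(m - r)) = n - k - r := by
          rw [Nat.cast_sub hrm]; ring
        rw [coeff_denomPoly_sub hx hrm, hinf, hidx]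
        ring
    _ = (denomPoly y : F⟦X⟧).coeffInt k := by
        rw [← mul_sum, sum_coeff_denomPoly_mul_hsup, hc, ← coeffInt_denomPoly_sub hy,
          sub_sub_cancel]

lemma sum_coeff_denomPoly_mul_Hsup {x : Fin m → F} {y : Fin n → F}
    (hx : ∀ i, x i ≠ 0) (hy : ∀ j, y j ≠ 0) (k : ℤ) :
    ∑ r ∈ range (m + 1), (denomPoly x).coeff r * Hsup x y (k - r) = 0 := by
  simp only [Hsup, mul_sub, sum_sub_distrib, sum_coeff_denomPoly_mul_hsup,
    sum_coeff_denomPoly_mul_hinf hx hy, sub_self]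

end Recurrence

lemma Matrix.det_eq_zero_of_linearRecurrence {R : Type*} [CommRing R] [IsDomain R] {N : ℕ}
    {c : ℕ → R} (hc : c 0 ≠ 0) {h : ℤ → R}
    (hrec : ∀ k, ∑ r ∈ range (N + 1), c r * h (k - r) = 0) (a : Fin (N + 1) → ℤ) :
    (Matrix.of fun i j : Fin (N + 1) => h (a i + (j : ℤ))).det = 0 := by
  rw [← Matrix.exists_mulVec_eq_zero_iff]
  refine ⟨fun j => c (N - j), fun hv => hc ?_, funext fun i => ?_⟩
  · simpa using congrFun hv (Fin.last N)
  rw [Pi.zero_apply, ← hrec (a i + N), ← sum_range_reflect]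
  simp only [Matrix.mulVec, dotProduct, Matrix.of_apply]
  rw [Fin.sum_univ_eq_sum_range (fun j => h (a i + j) * c (N - j))]
  refine sum_congr rfl fun r hr => ?_
  have hrN : r ≤ N := by simpa [Nat.lt_succ_iff] using hr
  rw [Nat.add_sub_cancel, Nat.cast_sub hrN, mul_comm, add_sub_assoc, sub_sub_cancel]

/-- for any integers λ_1,…,λ_{m+1},
det(H_{λ_i-i+j}(x,y))_{1≤i,j≤m+1} = 0 in m x-variables and n y-variables. -/
theorem supersym_jacobi_trudy_vanishing (m n : ℕ) (l : Fin (m + 1) → ℤ) :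
    (Matrix.of fun i j : Fin (m + 1) =>
        Hsup (Xs m n) (Ys m n) (l i - (i : ℤ) + (j : ℤ))).det = 0 := by
  have hx : ∀ i, Xs m n i ≠ 0 := fun i =>
    IsFractionRing.to_map_eq_zero_iff.not.mpr (MvPolynomial.X_ne_zero _)
  have hy : ∀ j, Ys m n j ≠ 0 := fun j =>
    IsFractionRing.to_map_eq_zero_iff.not.mpr (MvPolynomial.X_ne_zero _)
  have hP₀ : (denomPoly (Xs m n)).coeff 0 ≠ 0 := by
    rw [coeff_zero_denomPoly]
    exact one_ne_zero
  exact Matrix.det_eq_zero_of_linearRecurrence hP₀ (sum_coeff_denomPoly_mul_Hsup hx hy)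
    fun i => l i - i
end
end

section
/- Dual Jacobi–Trudy (conjugation) identity: let a_i, b_i (i ≥ 0) be elements of a commutative ring with a_0 = b_0 = 1 and (∑_{i≥0} a_i t^i)(∑_{i≥0} b_i t^i) = 1 as formal power series. Then for any partition λ with at most p parts and λ_1 ≤ r, det(a_{λ_i - i + j})_{1≤i,j≤p} = (-1)^{|λ|} det(b_{λ'_i - i + j})_{1≤i,j≤r}, where λ' is the conjugate partition (and a_k = b_k = 0 for k < 0). -/
open Finset

/-!
Put `N = p + r` and let `Tₐ = (a_{i-j})`, `T_b = (b_{i-j})` be the `N × N` lower unitriangular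
Toeplitz matrices; the power series identity says `Tₐ T_b = 1`. The numbers `λ_i + p - 1 - i`
(`i < p`) and `p + j - λ'_j` (`j < r`) enumerate `0, …, N - 1` (Macdonald I.(1.7)), so they define
a bijection `σ : Fin p ⊕ Fin r ≃ Fin N`; let `τ` be the one for the empty partition. Then
`M = Tₐ[σ, τ]` and `M' = T_b[τ, σ]` satisfy `M M' = 1`, the top left block of `M` is the matrix
`(a_{λ_i - i + j})` and the bottom right block of `M'` is the transpose of `(b_{λ'_i - i + j})`.
For any `M M' = 1`, multiplying `M` by `[[1, M'₁₂], [0, M'₂₂]]` gives `det M · det M'₂₂ = det M₁₁`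
(Jacobi's complementary minor theorem), and `det M = sign (τ⁻¹ σ) = (-1)^{|λ|}` because adding a
cell to `λ` composes `σ` with a transposition.
-/

namespace Equiv.Perm

variable {α β : Type*} [DecidableEq α] [Fintype α] [DecidableEq β] [Fintype β]

lemma sign_trans_swap_trans_symm (e f : α ≃ β) {x y : β} (hxy : x ≠ y) :
    sign ((e.trans (swap x y)).trans f.symm) = -sign (e.trans f.symm) := by
  have : (e.trans (swap x y)).trans f.symm =
      (e.trans f.symm).trans ((f.trans (swap x y)).trans f.symm) := by
    ext; simp only [trans_apply, apply_symm_apply]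
  rw [this, sign_trans, sign_trans_trans_symm, sign_swap hxy, neg_one_mul]

end Equiv.Perm

namespace Matrix

variable {m n R : Type*} [Fintype m] [DecidableEq m] [Fintype n] [DecidableEq n] [CommRing R]

lemma det_submatrix_equiv (σ τ : m ≃ n) (M : Matrix n n R) :
    (M.submatrix σ τ).det = Equiv.Perm.sign (σ.trans τ.symm) * M.det := by
  have : M.submatrix σ τ = (M.submatrix τ τ).submatrix (σ.trans τ.symm) id := by
    ext; simp
  rw [this, det_permute, det_submatrix_equiv_self]

lemma det_mul_det_toBlocks₂₂_of_mul_eq_one {M N : Matrix (m ⊕ n) (m ⊕ n) R} (h : M * N = 1) :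
    M.det * N.toBlocks₂₂.det = M.toBlocks₁₁.det := by
  rw [← fromBlocks_toBlocks M, ← fromBlocks_toBlocks N, fromBlocks_multiply, ← fromBlocks_one,
    fromBlocks_inj] at h
  have : M * fromBlocks 1 N.toBlocks₁₂ 0 N.toBlocks₂₂ =
      fromBlocks M.toBlocks₁₁ 0 M.toBlocks₂₁ 1 := by
    conv_lhs => rw [← fromBlocks_toBlocks M]
    rw [fromBlocks_multiply, h.2.1, h.2.2.2]
    simp
  simpa [det_fromBlocks_zero₂₁, det_fromBlocks_zero₁₂] using congrArg det this

end Matrix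

namespace JacobiTrudy

def toeplitz {A : Type*} (n : ℕ) (a : ℤ → A) : Matrix (Fin n) (Fin n) A :=
  Matrix.of fun i j => a ((i : ℤ) - (j : ℤ))

section Toeplitz

variable {A : Type*} [CommRing A]

lemma det_toeplitz {n : ℕ} {a : ℤ → A} (ha0 : a 0 = 1) (haneg : ∀ k : ℤ, k < 0 → a k = 0) :
    (toeplitz n a).det = 1 := by
  rw [Matrix.det_of_isLowerTriangular (toeplitz n a) fun i j hij => haneg _ ?_]
  · simp [toeplitz, ha0]
  · have : (i : ℕ) < j := hij
    omega

lemma sum_range_mul_sub_eq_ite {a b : ℤ → A}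
    (hab : (PowerSeries.mk fun i : ℕ => a (i : ℤ)) * (PowerSeries.mk fun i : ℕ => b (i : ℤ)) = 1)
    (d : ℕ) :
    ∑ m ∈ range (d + 1), a ((d - m : ℕ) : ℤ) * b (m : ℤ) = if d = 0 then 1 else 0 := by
  have h := congrArg (PowerSeries.coeff d) hab
  rw [mul_comm, PowerSeries.coeff_mul, Nat.sum_antidiagonal_eq_sum_range_succ_mk] at h
  simpa [PowerSeries.coeff_one, mul_comm] using h

lemma toeplitz_mul_toeplitz {n : ℕ} {a b : ℤ → A}
    (haneg : ∀ k : ℤ, k < 0 → a k = 0) (hbneg : ∀ k : ℤ, k < 0 → b k = 0)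
    (hab : (PowerSeries.mk fun i : ℕ => a (i : ℤ)) * (PowerSeries.mk fun i : ℕ => b (i : ℤ)) = 1) :
    toeplitz n a * toeplitz n b = 1 := by
  ext i j
  have hout : ∀ k : ℕ, k ∉ Ico (j : ℕ) (i + 1) → a ((i : ℤ) - k) * b ((k : ℤ) - j) = 0 := by
    intro k hk
    rw [mem_Ico, not_and_or] at hk
    rcases hk with hk | hk
    · rw [hbneg _ (by omega), mul_zero]
    · rw [haneg _ (by omega), zero_mul]
  rw [Matrix.mul_apply, Matrix.one_apply]
  simp only [toeplitz, Matrix.of_apply]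
  rw [Fin.sum_univ_eq_sum_range (fun k => a ((i : ℤ) - k) * b ((k : ℤ) - j)),
    ← sum_subset (fun k hk => by have := i.isLt; simp at hk ⊢; omega) fun k _ hk => hout k hk]
  rcases le_or_gt (j : ℕ) i with hji | hij
  · rw [sum_Ico_eq_sum_range, show (i : ℕ) + 1 - j = (i - j : ℕ) + 1 by omega]
    convert sum_range_mul_sub_eq_ite hab (i - j : ℕ) using 1
    · refine sum_congr rfl fun m hm => ?_
      rw [mem_range] at hm
      congr 2 <;> omega
    · exact if_congr (by rw [Fin.ext_iff]; omega) rfl rfl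
  · rw [Ico_eq_empty (by omega), sum_empty, if_neg (by simp [Fin.ext_iff]; omega)]

end Toeplitz

variable {p : ℕ}

def conj (l : Fin p → ℕ) (j : ℕ) : ℕ := #{t | j < l t}

lemma conj_le (l : Fin p → ℕ) (j : ℕ) : conj l j ≤ p :=
  (card_filter_le _ _).trans_eq (card_fin p)

lemma conj_antitone (l : Fin p → ℕ) : Antitone (conj l) :=
  fun _ _ hj => card_le_card fun _ => by simp only [mem_filter, mem_univ, true_and]; omega

lemma conj_zero (j : ℕ) : conj (0 : Fin p → ℕ) j = 0 := by
  simp [conj]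

lemma lt_conj_iff {l : Fin p → ℕ} (hl : Antitone l) (i : Fin p) (j : ℕ) :
    i < conj l j ↔ j < l i := by
  constructor
  · contrapose!
    intro hij
    have : ({t | j < l t} : Finset (Fin p)) ⊆ Iio i := fun t ht => by
      simp only [mem_filter, mem_univ, true_and] at ht
      exact mem_Iio.mpr (lt_of_not_ge fun hit => (hl hit).not_gt (lt_of_le_of_lt hij ht))
    simpa [conj] using card_le_card this
  · intro hij
    have : Iic i ⊆ ({t | j < l t} : Finset (Fin p)) := fun t ht => by
      simpa using hij.trans_le (hl (mem_Iic.mp ht))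
    simpa [conj] using card_le_card this

variable (r : ℕ)

def beta (l : Fin p → ℕ) : Fin p ⊕ Fin r → ℕ :=
  Sum.elim (fun i => l i + (p - 1 - i)) (fun j => p + j - conj l j)

variable {r}

lemma beta_lt {l : Fin p → ℕ} (hlr : ∀ i, l i ≤ r) (x : Fin p ⊕ Fin r) : beta r l x < p + r := by
  rcases x with i | j
  · have := hlr i; have := i.isLt; simp only [beta, Sum.elim_inl]; omega
  · have := j.isLt; simp only [beta, Sum.elim_inr]; omega

lemma beta_injective {l : Fin p → ℕ} (hl : Antitone l) : Function.Injective (beta r l) := by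
  refine Function.Injective.sumElim ?_ ?_ fun i j => ?_
  · refine StrictAnti.injective fun i i' hii' => ?_
    have := hl hii'.le; have : (i : ℕ) < i' := hii'; have := i'.isLt
    omega
  · refine StrictMono.injective fun j j' hjj' => ?_
    have := conj_antitone l (le_of_lt (show (j : ℕ) < j' from hjj'))
    have := conj_le l j'
    omega
  · have := lt_conj_iff hl i j; have := conj_le l j; have := i.isLt
    omega

noncomputable def betaEquiv {l : Fin p → ℕ} (hl : Antitone l) (hlr : ∀ i, l i ≤ r) :
    Fin p ⊕ Fin r ≃ Fin (p + r) :=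
  Equiv.ofBijective (fun x => ⟨beta r l x, beta_lt hlr x⟩) <|
    (Fintype.bijective_iff_injective_and_card _).mpr
      ⟨fun _ _ h => beta_injective hl (congrArg Fin.val h), by simp⟩

variable (p r) in
noncomputable def betaEquivZero : Fin p ⊕ Fin r ≃ Fin (p + r) :=
  betaEquiv (l := 0) antitone_const fun _ => Nat.zero_le r

@[simp] lemma val_betaEquiv {l : Fin p → ℕ} (hl : Antitone l) (hlr : ∀ i, l i ≤ r)
    (x : Fin p ⊕ Fin r) : (betaEquiv hl hlr x : ℕ) = beta r l x := rfl

section AddCell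

variable {l l' : Fin p → ℕ} {i : Fin p}

lemma conj_of_addCell (hi : l' i = l i + 1) (hrest : ∀ t ≠ i, l' t = l t) (j : ℕ) :
    conj l' j = conj l j + if j = l i then 1 else 0 := by
  classical
  simp only [conj, card_filter]
  rw [Fintype.sum_eq_add_sum_compl i, Fintype.sum_eq_add_sum_compl i,
    sum_congr rfl fun t ht => by rw [hrest t (by simpa using ht)], hi]
  split_ifs <;> omega

lemma sum_of_addCell (hi : l' i = l i + 1) (hrest : ∀ t ≠ i, l' t = l t) :
    ∑ t, l' t = ∑ t, l t + 1 := by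
  classical
  rw [Fintype.sum_eq_add_sum_compl i, Fintype.sum_eq_add_sum_compl i,
    sum_congr rfl fun t ht => by rw [hrest t (by simpa using ht)], hi]
  ring

lemma beta_of_addCell (hl : Antitone l) (hl' : Antitone l') (hi : l' i = l i + 1)
    (hrest : ∀ t ≠ i, l' t = l t) (j : Fin r) (hj : (j : ℕ) = l i) (x : Fin p ⊕ Fin r) :
    beta r l' x = Equiv.swap (beta r l (.inl i)) (beta r l (.inr j)) (beta r l x) := by
  have hconj := conj_of_addCell hi hrest
  have hcell : conj l (l i) = i := by
    have h₁ := lt_conj_iff hl i (l i)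
    have h₂ := lt_conj_iff hl' i (l i)
    rw [hconj, if_pos rfl] at h₂
    omega
  rw [(beta_injective hl).swap_apply]
  rcases x with t | k
  · by_cases ht : t = i
    · subst ht
      simp only [Equiv.swap_apply_left, beta, Sum.elim_inl, Sum.elim_inr, hi, hj, hcell]
      omega
    · rw [Equiv.swap_apply_of_ne_of_ne (by simpa using ht) Sum.inl_ne_inr]
      simp [beta, hrest t ht]
  · by_cases hk : k = j
    · subst hk
      simp only [Equiv.swap_apply_right, beta, Sum.elim_inl, Sum.elim_inr, hconj, hj, hcell,
        if_true]
      omega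
    · rw [Equiv.swap_apply_of_ne_of_ne Sum.inr_ne_inl (by simpa using hk)]
      have : (k : ℕ) ≠ l i := fun h => hk (Fin.ext (h.trans hj.symm))
      simp [beta, hconj, this]

end AddCell

lemma exists_antitone_update_pred {l : Fin p → ℕ} (hl : Antitone l) (h : l ≠ 0) :
    ∃ i, l i ≠ 0 ∧ Antitone (Function.update l i (l i - 1)) := by
  classical
  have hne : ({t | l t ≠ 0} : Finset (Fin p)).Nonempty := by
    obtain ⟨t, ht⟩ := Function.ne_iff.mp h
    exact ⟨t, by simpa using ht⟩
  set i := ({t | l t ≠ 0} : Finset (Fin p)).max' hne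
  have hi : l i ≠ 0 := by simpa using max'_mem _ hne
  have hlast : ∀ t, i < t → l t = 0 := fun t ht => by
    by_contra h0
    exact (le_max' _ t (by simpa using h0)).not_gt ht
  refine ⟨i, hi, fun x y hxy => ?_⟩
  simp only [Function.update_apply]
  split_ifs with hy hx hx
  · exact le_rfl
  · exact (hl (hy ▸ hxy)).trans' (Nat.sub_le _ _)
  · rw [hlast y (lt_of_le_of_ne (hx ▸ hxy) (Ne.symm hy))]
    exact Nat.zero_le _
  · exact hl hxy

lemma sign_betaEquiv {l : Fin p → ℕ} (hl : Antitone l) (hlr : ∀ i, l i ≤ r) :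
    Equiv.Perm.sign ((betaEquiv hl hlr).trans (betaEquivZero p r).symm) = (-1) ^ ∑ i, l i := by
  induction h : ∑ i, l i generalizing l with
  | zero =>
    obtain rfl : l = 0 := funext fun i => (sum_eq_zero_iff.mp h) i (mem_univ i)
    rw [betaEquivZero, Equiv.self_trans_symm, Equiv.Perm.sign_refl, pow_zero]
  | succ n ih =>
    obtain ⟨i, hi, hμ⟩ := exists_antitone_update_pred hl (by rintro rfl; simp at h)
    set μ := Function.update l i (l i - 1)
    have hcell : l i = μ i + 1 := by simp [μ]; omega
    have hrest : ∀ t ≠ i, l t = μ t := fun t ht => by simp [μ, ht]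
    have hμr : ∀ t, μ t ≤ r := fun t => by
      by_cases ht : t = i
      · subst ht; have := hlr t; omega
      · rw [← hrest t ht]; exact hlr t
    have hj : μ i < r := by have := hlr i; omega
    have hswap : betaEquiv hl hlr = (betaEquiv hμ hμr).trans
        (Equiv.swap (betaEquiv hμ hμr (.inl i)) (betaEquiv hμ hμr (.inr ⟨μ i, hj⟩))) := by
      ext x
      simp only [val_betaEquiv, Equiv.trans_apply, ← Fin.val_injective.swap_apply]
      exact beta_of_addCell hμ hl hcell hrest _ rfl x
    rw [hswap, Equiv.Perm.sign_trans_swap_trans_symm _ _ (by simp),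
      ih hμ hμr (by have := sum_of_addCell hcell hrest; omega), pow_succ, mul_neg_one]

variable {A : Type*}

lemma toBlocks₁₁_toeplitz_submatrix (a : ℤ → A) {l : Fin p → ℕ} (hl : Antitone l)
    (hlr : ∀ i, l i ≤ r) :
    ((toeplitz (p + r) a).submatrix (betaEquiv hl hlr) (betaEquivZero p r)).toBlocks₁₁ =
      Matrix.of fun i j : Fin p => a ((l i : ℤ) - (i : ℤ) + (j : ℤ)) := by
  ext i j
  have := i.isLt; have := j.isLt
  simp only [Matrix.toBlocks₁₁, Matrix.submatrix_apply, toeplitz, Matrix.of_apply, betaEquivZero,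
    val_betaEquiv, beta, Sum.elim_inl, Pi.zero_apply]
  congr 1
  omega

lemma toBlocks₂₂_toeplitz_submatrix (b : ℤ → A) {l : Fin p → ℕ} (hl : Antitone l)
    (hlr : ∀ i, l i ≤ r) :
    ((toeplitz (p + r) b).submatrix (betaEquivZero p r) (betaEquiv hl hlr)).toBlocks₂₂ =
      (Matrix.of fun i j : Fin r => b ((conj l i : ℤ) - (i : ℤ) + (j : ℤ))).transpose := by
  ext i j
  have := conj_le l j
  simp only [Matrix.toBlocks₂₂, Matrix.submatrix_apply, toeplitz, Matrix.of_apply, betaEquivZero,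
    val_betaEquiv, beta, Sum.elim_inr, conj_zero, Matrix.transpose_apply]
  congr 1
  omega

end JacobiTrudy

theorem dual_jacobi_trudy_general {A : Type*} [CommRing A] (p r : ℕ) (a b : ℤ → A)
    (ha0 : a 0 = 1)
    (haneg : ∀ k : ℤ, k < 0 → a k = 0) (hbneg : ∀ k : ℤ, k < 0 → b k = 0)
    (hab : (PowerSeries.mk fun i : ℕ => a (i : ℤ)) *
        (PowerSeries.mk fun i : ℕ => b (i : ℤ)) = 1)
    (l : Fin p → ℕ) (hl : Antitone l) (hlr : ∀ i, l i ≤ r) :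
    (Matrix.of fun i j : Fin p => a ((l i : ℤ) - (i : ℤ) + (j : ℤ))).det =
      (-1) ^ (∑ i, l i) *
        (Matrix.of fun i j : Fin r =>
          b (((Finset.univ.filter fun t : Fin p => (i : ℕ) < l t).card : ℤ)
              - (i : ℤ) + (j : ℤ))).det := by
  have hinv :
      (JacobiTrudy.toeplitz (p + r) a).submatrix (JacobiTrudy.betaEquiv hl hlr)
          (JacobiTrudy.betaEquivZero p r) *
        (JacobiTrudy.toeplitz (p + r) b).submatrix (JacobiTrudy.betaEquivZero p r)
          (JacobiTrudy.betaEquiv hl hlr) = 1 := by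
    rw [Matrix.submatrix_mul_equiv, JacobiTrudy.toeplitz_mul_toeplitz haneg hbneg hab,
      Matrix.submatrix_one_equiv]
  have h := Matrix.det_mul_det_toBlocks₂₂_of_mul_eq_one hinv
  rw [JacobiTrudy.toBlocks₁₁_toeplitz_submatrix, JacobiTrudy.toBlocks₂₂_toeplitz_submatrix,
    Matrix.det_transpose, Matrix.det_submatrix_equiv, JacobiTrudy.sign_betaEquiv,
    JacobiTrudy.det_toeplitz ha0 haneg, mul_one] at h
  rw [← h]
  push_cast
  rfl

/-- dual Jacobi–Trudy (conjugation) identity.  If (∑ a_i t^i)(∑ b_i t^i) = 1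
with a_0 = b_0 = 1 (and a_k = b_k = 0 for k < 0), and λ is a partition with at most p
parts and parts at most r, then det(a_{λ_i-i+j})_{p×p} = (-1)^{|λ|} det(b_{λ'_i-i+j})_{r×r},
where λ'_i = #{j : λ_j ≥ i} is the conjugate partition. -/
theorem dual_jacobi_trudy {A : Type*} [CommRing A] (p r : ℕ) (a b : ℤ → A)
    (ha0 : a 0 = 1) (hb0 : b 0 = 1)
    (haneg : ∀ k : ℤ, k < 0 → a k = 0) (hbneg : ∀ k : ℤ, k < 0 → b k = 0)
    (hab : (PowerSeries.mk fun i : ℕ => a (i : ℤ)) *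
        (PowerSeries.mk fun i : ℕ => b (i : ℤ)) = 1)
    (l : Fin p → ℕ) (hl : Antitone l) (hlr : ∀ i, l i ≤ r) :
    (Matrix.of fun i j : Fin p => a ((l i : ℤ) - (i : ℤ) + (j : ℤ))).det =
      (-1) ^ (∑ i, l i) *
        (Matrix.of fun i j : Fin r =>
          b (((Finset.univ.filter fun t : Fin p => (i : ℕ) < l t).card : ℤ)
              - (i : ℤ) + (j : ℤ))).det :=
  dual_jacobi_trudy_general p r a b ha0 haneg hbneg hab l hl hlr
end

section
/- In the abstract ring U^±_{m,n} generated by u_1,u_2,..., v_1,v_2,..., t subject to the relations R_I(w) = 0 for all integer sequences I of length m+1 (where w_i = u_i - t·v_{-i-m+n}, u_0 = v_0 = 1, u_i = v_i = 0 for i < 0, and R_I(w) = det(w_{i_α + β - 1})_{1≤α,β≤m+1}), the element t is invertible. -/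
noncomputable section

/-- The free polynomial ring on generators u_1, u_2, …, v_1, v_2, … and t. -/
abbrev FreeGen := MvPolynomial ((ℕ ⊕ ℕ) ⊕ Unit) ℤ

/-- The generator u_i (with u_0 = 1 and u_i = 0 for i < 0). -/
def uGen (i : ℤ) : FreeGen :=
  if i ≤ 0 then (if i = 0 then 1 else 0)
  else MvPolynomial.X (Sum.inl (Sum.inl (i.toNat - 1)))

/-- The generator v_i (with v_0 = 1 and v_i = 0 for i < 0). -/
def vGen (i : ℤ) : FreeGen :=
  if i ≤ 0 then (if i = 0 then 1 else 0)
  else MvPolynomial.X (Sum.inl (Sum.inr (i.toNat - 1)))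

/-- The generator t. -/
def tGen : FreeGen := MvPolynomial.X (Sum.inr ())

/-- w_i = u_i - t·v_{n-m-i}. -/
def wGen (m n : ℕ) (i : ℤ) : FreeGen :=
  uGen i - tGen * vGen ((n : ℤ) - (m : ℤ) - i)

/-- The ideal of relations R_I(w) = det(w_{i_α+β-1}) = 0 for all I ∈ ℤ^{m+1}. -/
def relIdeal (m n : ℕ) : Ideal FreeGen :=
  Ideal.span {p | ∃ I : Fin (m + 1) → ℤ,
    p = (Matrix.of fun α β : Fin (m + 1) => wGen m n (I α + (β : ℤ))).det}

/-!
Take `I = (0, -1, …, -m)`. Modulo `t` every `w_i` reduces to `u_i`, so the relation `R_I(w)`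
reduces to the determinant of the unitriangular Toeplitz matrix `(u_{β-α})`, which is `1`.
Hence `R_I(w) = 1 + t g` for some `g`, and `R_I(w) = 0` in `U^±_{m,n}` makes `-g` an inverse of `t`.
-/

theorem Matrix.det_toeplitz_eq_one {R : Type*} [CommRing R] {k : ℕ} (c : ℤ → R)
    (h_zero : c 0 = 1) (h_neg : ∀ i < 0, c i = 0) :
    (Matrix.of fun α β : Fin k => c ((β : ℤ) - α)).det = 1 := by
  have h_upper : (Matrix.of fun α β : Fin k => c ((β : ℤ) - α)).IsUpperTriangular := by
    intro α β hβα
    exact h_neg _ (by simpa using (Int.ofNat_lt.mpr hβα))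
  rw [Matrix.det_of_isUpperTriangular h_upper]
  simp [h_zero]

theorem Ideal.Quotient.isUnit_mk_of_mem_of_sub_one_mem_span {R : Type*} [CommRing R]
    {I : Ideal R} {t x : R} (hx : x ∈ I) (hx_one : x - 1 ∈ Ideal.span {t}) :
    IsUnit (Ideal.Quotient.mk I t) := by
  obtain ⟨g, hg⟩ := Ideal.mem_span_singleton'.mp hx_one
  have hx_zero : Ideal.Quotient.mk I x = 0 := Ideal.Quotient.eq_zero_iff_mem.mpr hx
  have hgt : Ideal.Quotient.mk I g * Ideal.Quotient.mk I t = -1 := by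
    rw [← map_mul, hg, map_sub, map_one, hx_zero, zero_sub]
  exact IsUnit.of_mul_eq_one (-Ideal.Quotient.mk I g) (by linear_combination -hgt)

theorem uGen_of_neg {i : ℤ} (hi : i < 0) : uGen i = 0 := by
  rw [uGen, if_pos hi.le, if_neg hi.ne]

theorem mk_span_tGen_wGen_eq_uGen (m n : ℕ) (i : ℤ) :
    Ideal.Quotient.mk (Ideal.span {tGen}) (wGen m n i) =
      Ideal.Quotient.mk (Ideal.span {tGen}) (uGen i) := by
  rw [Ideal.Quotient.eq, wGen, sub_sub_cancel_left, neg_mem_iff]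
  exact Ideal.mul_mem_right _ _ (Ideal.mem_span_singleton_self _)

/-- in the ring U^±_{m,n} = FreeGen / relIdeal, presented by generators
u_i, v_i, t and the relations R_I(w) = 0 for all integer sequences I of length m+1,
the element t is invertible. -/
theorem t_invertible_in_U (m n : ℕ) :
    IsUnit (Ideal.Quotient.mk (relIdeal m n) tGen) := by
  set R := (Matrix.of fun α β : Fin (m + 1) => wGen m n (-(α : ℤ) + β)).det
  have hR_mem : R ∈ relIdeal m n := Ideal.subset_span ⟨fun α => -(α : ℤ), rfl⟩
  have hR_mod_t : Ideal.Quotient.mk (Ideal.span {tGen}) R = 1 := by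
    rw [RingHom.map_det]
    convert Matrix.det_toeplitz_eq_one (fun i => Ideal.Quotient.mk (Ideal.span {tGen}) (uGen i))
      (by simp [uGen]) (fun i hi => by simp [uGen_of_neg hi]) using 2
    ext α β
    simp [mk_span_tGen_wGen_eq_uGen, neg_add_eq_sub]
  refine Ideal.Quotient.isUnit_mk_of_mem_of_sub_one_mem_span hR_mem ?_
  rw [← Ideal.Quotient.eq, hR_mod_t, map_one]
end
end
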